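/- In G, the three elements x₀ = b·a, x₁ = a·b, and x₂ = b⁻¹·a·b² pairwise commute: x₀x₁ = x₁x₀, x₁x₂ = x₂x₁, and x₀x₂ = x₂x₀. -/

import Mathlib

/-- The generator `a` of the free group on two generators. -/
def fa : FreeGroup (Fin 2) := FreeGroup.of 0
/-- The generator `b` of the free group on two generators. -/
def fb : FreeGroup (Fin 2) := FreeGroup.of 1

/-- The two relators `(b·a²)·(a³·b²)⁻¹` and `(b²·a)·(a²·b³)⁻¹`. -/
def csRels : Set (FreeGroup (Fin 2)) :=
  {(fb * fa ^ 2) * (fa ^ 3 * fb ^ 2)⁻¹, (fb ^ 2 * fa) * (fa ^ 2 * fb ^ 3)⁻¹}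

/-- The group `G = ⟨a, b ∣ b·a² = a³·b², b²·a = a²·b³⟩`. -/
abbrev G : Type := PresentedGroup csRels

/-- The image of `a` in `G`. -/
def ga : G := PresentedGroup.of 0
/-- The image of `b` in `G`. -/
def gb : G := PresentedGroup.of 1

/-! Writing `x₁ = a·b`, the other two elements are its conjugates `x₀ = b·x₁·b⁻¹` and
`x₂ = b⁻¹·x₁·b`. Both `x₀·x₁` and `x₁·x₀` reduce to `a³·b³` under the relations, and
conjugating by `b⁻¹` turns this into `x₁·x₂ = x₂·x₁`. For the last pair, `b·x₀·x₂` and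
`b·x₂·x₀` both reduce to `a⁴·b⁵`. -/

section Relations

variable {H : Type*} [Group H] {a b : H}

theorem ba_mul_ab_eq (h₁ : b * a ^ 2 = a ^ 3 * b ^ 2) : b * a * (a * b) = a ^ 3 * b ^ 3 :=
  calc b * a * (a * b) = b * a ^ 2 * b := by simp [pow_succ, mul_assoc]
    _ = a ^ 3 * b ^ 2 * b := by rw [h₁]
    _ = a ^ 3 * b ^ 3 := by simp [pow_succ, mul_assoc]

theorem ab_mul_ba_eq (h₂ : b ^ 2 * a = a ^ 2 * b ^ 3) : a * b * (b * a) = a ^ 3 * b ^ 3 :=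
  calc a * b * (b * a) = a * (b ^ 2 * a) := by simp [pow_succ, mul_assoc]
    _ = a * (a ^ 2 * b ^ 3) := by rw [h₂]
    _ = a ^ 3 * b ^ 3 := by simp [pow_succ, mul_assoc]

variable (h₁ : b * a ^ 2 = a ^ 3 * b ^ 2) (h₂ : b ^ 2 * a = a ^ 2 * b ^ 3)
include h₁ h₂

theorem commute_ba_ab : Commute (b * a) (a * b) :=
  (ba_mul_ab_eq h₁).trans (ab_mul_ba_eq h₂).symm

theorem commute_ab_inv_mul_mul_sq : Commute (a * b) (b⁻¹ * a * b ^ 2) := by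
  convert (commute_ba_ab h₁ h₂).conj b⁻¹ using 1 <;> simp [pow_succ, mul_assoc]

theorem commute_ba_inv_mul_mul_sq : Commute (b * a) (b⁻¹ * a * b ^ 2) := by
  refine mul_left_cancel (a := b) ?_
  calc b * (b * a * (b⁻¹ * a * b ^ 2))
        = b ^ 2 * a * b⁻¹ * a * b ^ 2 := by simp [pow_succ, mul_assoc]
    _ = a ^ 2 * b ^ 3 * b⁻¹ * a * b ^ 2 := by rw [h₂]
    _ = a ^ 2 * (b ^ 2 * a) * b ^ 2 := by simp [pow_succ, mul_assoc]
    _ = a ^ 2 * (a ^ 2 * b ^ 3) * b ^ 2 := by rw [h₂]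
    _ = a * (a ^ 3 * b ^ 2) * b ^ 3 := by simp [pow_succ, mul_assoc]
    _ = a * (b * a ^ 2) * b ^ 3 := by rw [h₁]
    _ = a * b * (a ^ 2 * b ^ 3) := by simp [pow_succ, mul_assoc]
    _ = a * b * (b ^ 2 * a) := by rw [h₂]
    _ = b * (b⁻¹ * a * b ^ 2 * (b * a)) := by simp [pow_succ, mul_assoc]

end Relations

theorem gb_mul_ga_sq : gb * ga ^ 2 = ga ^ 3 * gb ^ 2 :=
  PresentedGroup.mk_eq_mk_of_mul_inv_mem (Or.inl rfl)

theorem gb_sq_mul_ga : gb ^ 2 * ga = ga ^ 2 * gb ^ 3 :=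
  PresentedGroup.mk_eq_mk_of_mul_inv_mem (Or.inr rfl)

/-- In `G`, the elements `x₀ = b·a`, `x₁ = a·b`, `x₂ = b⁻¹·a·b²` pairwise commute. -/
theorem x_pairwise_commute :
    (gb * ga) * (ga * gb) = (ga * gb) * (gb * ga) ∧
    (ga * gb) * (gb⁻¹ * ga * gb ^ 2) = (gb⁻¹ * ga * gb ^ 2) * (ga * gb) ∧
    (gb * ga) * (gb⁻¹ * ga * gb ^ 2) = (gb⁻¹ * ga * gb ^ 2) * (gb * ga) :=
  ⟨commute_ba_ab gb_mul_ga_sq gb_sq_mul_ga,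
    commute_ab_inv_mul_mul_sq gb_mul_ga_sq gb_sq_mul_ga,
    commute_ba_inv_mul_mul_sq gb_mul_ga_sq gb_sq_mul_ga⟩
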